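/- Let a ≥ 1 and r ≥ 1 be real numbers and let f: {0,1}^n → [0,1] be an a-self-bounding function. Then the function g defined by g(x) = 1 − 1/r + f(x)/r has range contained in [0,1] and is (a/r)-self-bounding. -/

import Mathlib

/-!
Dividing by `r ≥ 0` and adding a constant is monotone, so it commutes with `min` and scales every
coordinate drop `f x - min (f x_{i←0}) (f x_{i←1})` by `1 / r`. Both self-bounding conditions then
follow from those of `f`, the second one because `f x ≤ 1 - 1/r + f x / r` when `f x ≤ 1 ≤ r`.
-/

noncomputable section

/-- A function `f : {0,1}^n → ℝ` is `a`-self-bounding. -/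
def SelfBounding (n : ℕ) (a : ℝ) (f : (Fin n → Bool) → ℝ) : Prop :=
  ∀ x : Fin n → Bool,
    (∀ i : Fin n,
      f x - min (f (Function.update x i false)) (f (Function.update x i true)) ≤ 1) ∧
    ∑ i : Fin n,
      (f x - min (f (Function.update x i false)) (f (Function.update x i true))) ≤ a * f x

open Function

variable {n : ℕ}

def coordDrop (f : (Fin n → Bool) → ℝ) (x : Fin n → Bool) (i : Fin n) : ℝ :=
  f x - min (f (update x i false)) (f (update x i true))

theorem selfBounding_iff_coordDrop {a : ℝ} {f : (Fin n → Bool) → ℝ} :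
    SelfBounding n a f ↔
      ∀ x, (∀ i, coordDrop f x i ≤ 1) ∧ ∑ i, coordDrop f x i ≤ a * f x :=
  Iff.rfl

theorem coordDrop_const_add_div (f : (Fin n → Bool) → ℝ) (x : Fin n → Bool) (i : Fin n)
    (c : ℝ) {r : ℝ} (hr : 0 ≤ r) :
    coordDrop (fun y => c + f y / r) x i = coordDrop f x i / r := by
  have hmono : Monotone fun t : ℝ => c + t / r := fun _ _ h => by dsimp only; gcongr
  simp only [coordDrop, ← hmono.map_min]
  ring

theorem le_one_sub_inv_add_div {r t : ℝ} (hr : 1 ≤ r) (ht : t ≤ 1) :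
    t ≤ 1 - 1 / r + t / r := by
  have hr₀ : 0 < r := zero_lt_one.trans_le hr
  have key : 1 - 1 / r + t / r - t = (1 - t) * (1 - 1 / r) := by ring
  have hinv : 1 / r ≤ 1 := (div_le_one hr₀).2 hr
  nlinarith

theorem one_sub_inv_add_div_mem_Icc {r t : ℝ} (hr : 1 ≤ r) (ht : t ∈ Set.Icc (0 : ℝ) 1) :
    1 - 1 / r + t / r ∈ Set.Icc (0 : ℝ) 1 := by
  have hr₀ : 0 < r := zero_lt_one.trans_le hr
  have hinv : 1 / r ≤ 1 := (div_le_one hr₀).2 hr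
  have hdiv : t / r ≤ 1 / r := by gcongr; exact ht.2
  have hdiv₀ : 0 ≤ t / r := div_nonneg ht.1 hr₀.le
  constructor <;> linarith

theorem SelfBounding.one_sub_inv_add_div {a r : ℝ} {f : (Fin n → Bool) → ℝ}
    (hf : SelfBounding n a f) (ha : 0 ≤ a) (hr : 1 ≤ r) (hf₁ : ∀ x, f x ≤ 1) :
    SelfBounding n (a / r) (fun x => 1 - 1 / r + f x / r) := by
  have hr₀ : 0 < r := zero_lt_one.trans_le hr
  rw [selfBounding_iff_coordDrop] at hf ⊢
  intro x
  obtain ⟨hdrop, hsum⟩ := hf x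
  simp only [coordDrop_const_add_div f x _ _ hr₀.le, ← Finset.sum_div]
  refine ⟨fun i => ?_, ?_⟩
  · calc coordDrop f x i / r ≤ 1 / r := by gcongr; exact hdrop i
      _ ≤ 1 := (div_le_one hr₀).2 hr
  · calc (∑ i, coordDrop f x i) / r ≤ a * f x / r := by gcongr
      _ = a / r * f x := by ring
      _ ≤ a / r * (1 - 1 / r + f x / r) := by
        gcongr
        exact le_one_sub_inv_add_div hr (hf₁ x)

end

theorem selfbounding_lifting (n : ℕ) (a r : ℝ) (ha : 1 ≤ a) (hr : 1 ≤ r)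
    (f : (Fin n → Bool) → ℝ) (hf01 : ∀ x, f x ∈ Set.Icc (0 : ℝ) 1)
    (hf : SelfBounding n a f) :
    (∀ x, (1 - 1 / r + f x / r) ∈ Set.Icc (0 : ℝ) 1) ∧
      SelfBounding n (a / r) (fun x => 1 - 1 / r + f x / r) :=
  ⟨fun x => one_sub_inv_add_div_mem_Icc hr (hf01 x),
    hf.one_sub_inv_add_div (zero_le_one.trans ha) hr fun x => (hf01 x).2⟩
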